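/- The resource reduction relation →∂ on finite ℕ-linear sums of resource expressions is strongly normalizing: there is no infinite sequence E₀ →∂ E₁ →∂ E₂ →∂ ⋯ of finite sums of resource expressions. -/

import Mathlib

set_option maxHeartbeats 1000000

/-! ### Rigid resource terms -/

/-- Rigid resource terms (de Bruijn indices for variables):
`a ::= x | λ.a | ⟨a⟩b⃗ | a⊕• | •⊕a` where argument lists are ordered. -/
inductive Rt : Type
  | var : ℕ → Rt
  | lam : Rt → Rt
  | app : Rt → List Rt → Rt
  | inl : Rt → Rt
  | inr : Rt → Rt
deriving Inhabited

/-- Rigid resource expressions: terms or (rigid) monomials. -/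
abbrev REx : Type := Rt ⊕ List Rt

/-! ### Isomorphism of rigid expressions -/

mutual
  /-- Two rigid terms are isomorphic (`≅`) when they differ only by
  permutations of argument lists. -/
  inductive IsoT : Rt → Rt → Prop
    | var (x : ℕ) : IsoT (.var x) (.var x)
    | lam {a a'} : IsoT a a' → IsoT (.lam a) (.lam a')
    | inl {a a'} : IsoT a a' → IsoT (.inl a) (.inl a')
    | inr {a a'} : IsoT a a' → IsoT (.inr a) (.inr a')
    | app {c c' : Rt} {ds ds' : List Rt} :
        IsoT c c' → IsoM ds ds' → IsoT (.app c ds) (.app c' ds')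
  /-- Isomorphism of rigid monomials: a permutation `σ` together with
  isomorphisms `aᵢ ≅ a'_{σ(i)}`. -/
  inductive IsoM : List Rt → List Rt → Prop
    | mk (as as' : List Rt) (h : as'.length = as.length) (σ : Equiv.Perm (Fin as.length))
        (H : ∀ i : Fin as.length, IsoT (as.get i) (as'.get ((σ i).cast h.symm))) :
        IsoM as as'
end

/-! ### Resource expressions as quotients of rigid expressions -/

/-- Resource terms: rigid terms up to permutations of arguments, i.e. terms
whose argument lists are multisets. -/
def ResTerm : Type := Quot IsoT

instance : Inhabited ResTerm := ⟨Quot.mk _ (.var 0)⟩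

/-- The resource term represented by a rigid term (`r ◁ |r|`). -/
def rmk : Rt → ResTerm := Quot.mk IsoT

/-- A choice of rigid representation of a resource term. -/
noncomputable def rout : ResTerm → Rt := Quot.out

/-- The resource monomial (multiset) represented by a rigid monomial (list). -/
def toMul (bs : List Rt) : Multiset ResTerm := ↑(bs.map rmk)

/-- Resource expressions: terms or monomials (finite multisets of terms). -/
abbrev ResExpr : Type := ResTerm ⊕ Multiset ResTerm

/-- The resource expression represented by a rigid expression. -/
def toQ : REx → ResExpr := Sum.map rmk toMul

/-- A choice of rigid representation of a resource expression. -/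
noncomputable def outE : ResExpr → REx :=
  Sum.map rout (fun m => m.toList.map rout)

/-- Variable as a resource term. -/
def qVar (x : ℕ) : ResTerm := rmk (.var x)

/-- Abstraction on resource terms. -/
noncomputable def qLam (s : ResTerm) : ResTerm := rmk (.lam (rout s))

/-- Left injection `(-) ⊕ •` on resource terms. -/
noncomputable def qInl (s : ResTerm) : ResTerm := rmk (.inl (rout s))

/-- Right injection `• ⊕ (-)` on resource terms. -/
noncomputable def qInr (s : ResTerm) : ResTerm := rmk (.inr (rout s))

/-- Application `⟨s⟩t̄` of a resource term to a resource monomial. -/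
noncomputable def qApp (s : ResTerm) (t : Multiset ResTerm) : ResTerm :=
  rmk (.app (rout s) (t.toList.map rout))

/-! ### Occurrence counting and rigid substitution -/

namespace Rt

/-- Shift free de Bruijn indices `≥ c` up by one in a rigid term. -/
def shiftR (c : ℕ) : Rt → Rt
  | .var n => .var (if n < c then n else n + 1)
  | .lam a => .lam (a.shiftR (c + 1))
  | .inl a => .inl (a.shiftR c)
  | .inr a => .inr (a.shiftR c)
  | .app d es => .app (d.shiftR c) (es.attach.map fun e => e.1.shiftR c)
termination_by r => sizeOf r
decreasing_by
  all_goals simp_wf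
  all_goals try omega
  all_goals (have := List.sizeOf_lt_of_mem e.2; omega)

end Rt

/-- Number of free occurrences `n_x(a)` of the variable `x` in a rigid term. -/
def nx (x : ℕ) : Rt → ℕ
  | .var n => if n = x then 1 else 0
  | .lam a => nx (x + 1) a
  | .inl a => nx x a
  | .inr a => nx x a
  | .app d es => nx x d + (es.attach.map fun e => nx x e.1).sum
termination_by r => sizeOf r
decreasing_by
  all_goals simp_wf
  all_goals try omega
  all_goals (have := List.sizeOf_lt_of_mem e.2; omega)

/-- Number of free occurrences of `x` in a rigid monomial. -/
def nxL (x : ℕ) (l : List Rt) : ℕ := (l.map (nx x)).sum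

/-- Number of free occurrences of `x` in a rigid expression. -/
def nxE (x : ℕ) : REx → ℕ := Sum.elim (nx x) (nxL x)

mutual
  /-- Rigid substitution `r[b⃗/x]`: the occurrences of `x` in `r`, taken from
  left to right, are replaced by the successive elements of `b⃗`; it is
  undefined (`none`, i.e. the partial rigid expression `0`) unless `n_x(r) = |b⃗|`. -/
  def rsubst : Rt → ℕ → List Rt → Option Rt
    | .var n, x, bs =>
        if n = x then (match bs with | [b] => some b | _ => none)
        else (match bs with
              | [] => some (.var (if x < n then n - 1 else n))
              | _ => none)
    | .lam a, x, bs => (rsubst a (x + 1) (bs.map (Rt.shiftR 0))).map .lam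
    | .inl a, x, bs => (rsubst a x bs).map .inl
    | .inr a, x, bs => (rsubst a x bs).map .inr
    | .app c ds, x, bs =>
        match rsubst c x (bs.take (nx x c)), rsubstL ds x (bs.drop (nx x c)) with
        | some c', some ds' => some (.app c' ds')
        | _, _ => none
  /-- Rigid substitution in a rigid monomial. -/
  def rsubstL : List Rt → ℕ → List Rt → Option (List Rt)
    | [], _, bs => (match bs with | [] => some [] | _ => none)
    | a :: as, x, bs =>
        match rsubst a x (bs.take (nx x a)), rsubstL as x (bs.drop (nx x a)) with
        | some a', some as' => some (a' :: as')
        | _, _ => none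
end

/-- Rigid substitution on rigid expressions. -/
def rsubstE : REx → ℕ → List Rt → Option REx
  | .inl r, x, bs => (rsubst r x bs).map .inl
  | .inr l, x, bs => (rsubstL l x bs).map .inr

/-- Left action of a permutation on a list:
`σ·(b₁,…,bₙ) = (b_{σ⁻¹(1)},…,b_{σ⁻¹(n)})` (identity if the length is not `n`). -/
def permList {α : Type*} {n : ℕ} (σ : Equiv.Perm (Fin n)) (l : List α) : List α :=
  if h : l.length = n then List.ofFn (fun j : Fin n => l.get ((σ.symm j).cast h.symm))
  else l

/-! ### Symmetric multilinear substitution -/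

/-- Symmetric multilinear substitution computed on rigid representatives:
`∑_{σ ∈ S_n} |r[σ·b⃗/x]|`, as a finite ℕ-linear sum of resource expressions. -/
noncomputable def dsubRig (x : ℕ) (r : REx) (bs : List Rt) : ResExpr →₀ ℕ :=
  ∑ σ : Equiv.Perm (Fin bs.length),
    (rsubstE r x (permList σ bs)).elim 0 (fun u => Finsupp.single (toQ u) 1)

/-- The symmetric multilinear substitution `∂_x e · t̄`, a finite ℕ-linear sum
of resource expressions. -/
noncomputable def dsub (x : ℕ) (e : ResExpr) (t : Multiset ResTerm) : ResExpr →₀ ℕ :=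
  dsubRig x (outE e) (t.toList.map rout)

/-! ### Resource reduction -/

/-- Context `λx.(-)` applied to a sum element. -/
noncomputable def cLam : ResExpr → ResExpr
  | .inl s => .inl (qLam s)
  | e => e

/-- Context `(-)⊕•`. -/
noncomputable def cInl : ResExpr → ResExpr
  | .inl s => .inl (qInl s)
  | e => e

/-- Context `•⊕(-)`. -/
noncomputable def cInr : ResExpr → ResExpr
  | .inl s => .inl (qInr s)
  | e => e

/-- Context `⟨-⟩t̄`. -/
noncomputable def cAppL (t : Multiset ResTerm) : ResExpr → ResExpr
  | .inl s => .inl (qApp s t)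
  | e => e

/-- Context `⟨s⟩(-)`. -/
noncomputable def cAppR (s : ResTerm) : ResExpr → ResExpr
  | .inr m => .inl (qApp s m)
  | e => e

/-- Context `[-]·t̄`. -/
noncomputable def cMon (t : Multiset ResTerm) : ResExpr → ResExpr
  | .inl s => .inr (s ::ₘ t)
  | e => e

/-- One-step reduction `→∂` from resource expressions to finite ℕ-linear sums
of resource expressions. -/
inductive Red : ResExpr → (ResExpr →₀ ℕ) → Prop
  | beta (s : ResTerm) (t : Multiset ResTerm) :
      Red (.inl (qApp (qLam s) t)) (dsub 0 (.inl s) t)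
  | appInl (s : ResTerm) (t : Multiset ResTerm) :
      Red (.inl (qApp (qInl s) t)) (Finsupp.single (.inl (qInl (qApp s t))) 1)
  | appInr (s : ResTerm) (t : Multiset ResTerm) :
      Red (.inl (qApp (qInr s) t)) (Finsupp.single (.inl (qInr (qApp s t))) 1)
  | lamInl (s : ResTerm) :
      Red (.inl (qLam (qInl s))) (Finsupp.single (.inl (qInl (qLam s))) 1)
  | lamInr (s : ResTerm) :
      Red (.inl (qLam (qInr s))) (Finsupp.single (.inl (qInr (qLam s))) 1)
  | lamCtx {s : ResTerm} {S : ResExpr →₀ ℕ} :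
      Red (.inl s) S → Red (.inl (qLam s)) (S.mapDomain cLam)
  | appLCtx {s : ResTerm} {S : ResExpr →₀ ℕ} (t : Multiset ResTerm) :
      Red (.inl s) S → Red (.inl (qApp s t)) (S.mapDomain (cAppL t))
  | appRCtx {t : Multiset ResTerm} {T : ResExpr →₀ ℕ} (s : ResTerm) :
      Red (.inr t) T → Red (.inl (qApp s t)) (T.mapDomain (cAppR s))
  | inlCtx {s : ResTerm} {S : ResExpr →₀ ℕ} :
      Red (.inl s) S → Red (.inl (qInl s)) (S.mapDomain cInl)
  | inrCtx {s : ResTerm} {S : ResExpr →₀ ℕ} :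
      Red (.inl s) S → Red (.inl (qInr s)) (S.mapDomain cInr)
  | monCtx {s : ResTerm} {S : ResExpr →₀ ℕ} (t : Multiset ResTerm) :
      Red (.inl s) S → Red (.inr (s ::ₘ t)) (S.mapDomain (cMon t))

/-- Reduction `→∂` on finite ℕ-linear sums of resource expressions:
`e + F →∂ E₀ + F` whenever `e →∂ E₀`. -/
def RedS (E E' : ResExpr →₀ ℕ) : Prop :=
  ∃ (e : ResExpr) (E₀ F : ResExpr →₀ ℕ),
    Red e E₀ ∧ E = Finsupp.single e 1 + F ∧ E' = E₀ + F

/-- The (unique) `→∂`-normal form of a resource expression: the normal sum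
reachable from it (`→∂` being confluent and strongly normalizing). -/
noncomputable def NF (e : ResExpr) : ResExpr →₀ ℕ :=
  Classical.epsilon fun E =>
    Relation.ReflTransGen RedS (Finsupp.single e 1) E ∧ ∀ E', ¬ RedS E E'



/-! ### Auxiliary: measures -/

section SN

mutual
  def mu1 : Rt → ℕ
    | .var _ => 1
    | .lam a => mu1 a + 1
    | .inl a => mu1 a + 1
    | .inr a => mu1 a + 1
    | .app d es => mu1 d + mu1L es + 1
  def mu1L : List Rt → ℕ
    | [] => 0
    | a :: as => mu1 a + mu1L as
end

mutual
  def mu2 : Rt → ℕ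
    | .var _ => 1
    | .lam a => 2 * mu2 a
    | .inl a => mu2 a + 1
    | .inr a => mu2 a + 1
    | .app d es => 2 * (mu2 d + mu2L es + 1)
  def mu2L : List Rt → ℕ
    | [] => 0
    | a :: as => mu2 a + mu2L as
end

theorem mu1L_eq (l : List Rt) : mu1L l = (l.map mu1).sum := by
  induction l with
  | nil => simp [mu1L]
  | cons a as ih => simp [mu1L, ih]

theorem mu2L_eq (l : List Rt) : mu2L l = (l.map mu2).sum := by
  induction l with
  | nil => simp [mu2L]
  | cons a as ih => simp [mu2L, ih]

theorem sum_perm {α} (f : α → ℕ) (as as' : List α) (h : as'.length = as.length)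
    (σ : Equiv.Perm (Fin as.length))
    (H : ∀ i : Fin as.length, f (as.get i) = f (as'.get ((σ i).cast h.symm))) :
    (as.map f).sum = (as'.map f).sum := by
  rw [← List.ofFn_get as, ← List.ofFn_get as', List.map_ofFn, List.map_ofFn,
    List.sum_ofFn, List.sum_ofFn]
  calc ∑ i : Fin as.length, (f ∘ as.get) i
      = ∑ i : Fin as.length, (f ∘ as'.get) ((σ i).cast h.symm) := by
        exact Finset.sum_congr rfl fun i _ => H i
    _ = ∑ j : Fin as'.length, (f ∘ as'.get) j := by
        exact Fintype.sum_equiv (σ.trans (finCongr h.symm)) _ _ (fun i => rfl)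

mutual
  theorem isoT_mu1 {a a'} (h : IsoT a a') : mu1 a = mu1 a' := by
    match h with
    | .var x => rfl
    | .lam h => simp [mu1, isoT_mu1 h]
    | .inl h => simp [mu1, isoT_mu1 h]
    | .inr h => simp [mu1, isoT_mu1 h]
    | .app hc hm => simp [mu1, isoT_mu1 hc, isoM_mu1 hm]
  termination_by sizeOf a
  decreasing_by all_goals simp_wf <;> omega
  theorem isoM_mu1 {l l'} (h : IsoM l l') : mu1L l = mu1L l' := by
    match h with
    | .mk as as' hl σ H =>
      rw [mu1L_eq, mu1L_eq]
      exact sum_perm mu1 as as' hl σ (fun i => isoT_mu1 (H i))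
  termination_by sizeOf l
  decreasing_by
    simp_wf
    have h1 : as[(i:ℕ)] ∈ as := List.getElem_mem i.isLt
    have := List.sizeOf_lt_of_mem h1
    omega
end

mutual
  theorem isoT_mu2 {a a'} (h : IsoT a a') : mu2 a = mu2 a' := by
    match h with
    | .var x => rfl
    | .lam h => simp [mu2, isoT_mu2 h]
    | .inl h => simp [mu2, isoT_mu2 h]
    | .inr h => simp [mu2, isoT_mu2 h]
    | .app hc hm => simp [mu2, isoT_mu2 hc, isoM_mu2 hm]
  termination_by sizeOf a
  decreasing_by all_goals simp_wf <;> omega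
  theorem isoM_mu2 {l l'} (h : IsoM l l') : mu2L l = mu2L l' := by
    match h with
    | .mk as as' hl σ H =>
      rw [mu2L_eq, mu2L_eq]
      exact sum_perm mu2 as as' hl σ (fun i => isoT_mu2 (H i))
  termination_by sizeOf l
  decreasing_by
    simp_wf
    have h1 : as[(i:ℕ)] ∈ as := List.getElem_mem i.isLt
    have := List.sizeOf_lt_of_mem h1
    omega
end

/-! Quotient-level measures -/

def qmu1 : ResTerm → ℕ := Quot.lift mu1 (fun _ _ h => isoT_mu1 h)
def qmu2 : ResTerm → ℕ := Quot.lift mu2 (fun _ _ h => isoT_mu2 h)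
def qmu1M (t : Multiset ResTerm) : ℕ := (t.map qmu1).sum
def qmu2M (t : Multiset ResTerm) : ℕ := (t.map qmu2).sum

noncomputable def meas (e : ResExpr) : ℕ × ℕ :=
  Sum.elim (fun s => (qmu1 s, qmu2 s)) (fun t => (qmu1M t, qmu2M t)) e

def MLT : ℕ × ℕ → ℕ × ℕ → Prop := Prod.Lex (· < ·) (· < ·)

theorem mlt_iff {p q : ℕ × ℕ} : MLT p q ↔ p.1 < q.1 ∨ (p.1 = q.1 ∧ p.2 < q.2) :=
  Prod.lex_def

theorem qmu1_rmk (r : Rt) : qmu1 (rmk r) = mu1 r := rfl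
theorem qmu2_rmk (r : Rt) : qmu2 (rmk r) = mu2 r := rfl

theorem qmu1_rout (s : ResTerm) : mu1 (rout s) = qmu1 s := congrArg qmu1 (Quot.out_eq s)
theorem qmu2_rout (s : ResTerm) : mu2 (rout s) = qmu2 s := congrArg qmu2 (Quot.out_eq s)

theorem mu1L_toList (t : Multiset ResTerm) : mu1L (t.toList.map rout) = qmu1M t := by
  rw [mu1L_eq, List.map_map]
  have : (mu1 ∘ rout) = qmu1 := funext fun s => qmu1_rout s
  rw [this, qmu1M, ← Multiset.sum_coe, ← Multiset.map_coe, Multiset.coe_toList]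

theorem mu2L_toList (t : Multiset ResTerm) : mu2L (t.toList.map rout) = qmu2M t := by
  rw [mu2L_eq, List.map_map]
  have : (mu2 ∘ rout) = qmu2 := funext fun s => qmu2_rout s
  rw [this, qmu2M, ← Multiset.sum_coe, ← Multiset.map_coe, Multiset.coe_toList]

theorem qmu1_lam (s : ResTerm) : qmu1 (qLam s) = qmu1 s + 1 := by
  rw [qLam, qmu1_rmk, mu1, qmu1_rout]
theorem qmu2_lam (s : ResTerm) : qmu2 (qLam s) = 2 * qmu2 s := by
  rw [qLam, qmu2_rmk, mu2, qmu2_rout]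
theorem qmu1_inl (s : ResTerm) : qmu1 (qInl s) = qmu1 s + 1 := by
  rw [qInl, qmu1_rmk, mu1, qmu1_rout]
theorem qmu2_inl (s : ResTerm) : qmu2 (qInl s) = qmu2 s + 1 := by
  rw [qInl, qmu2_rmk, mu2, qmu2_rout]
theorem qmu1_inr (s : ResTerm) : qmu1 (qInr s) = qmu1 s + 1 := by
  rw [qInr, qmu1_rmk, mu1, qmu1_rout]
theorem qmu2_inr (s : ResTerm) : qmu2 (qInr s) = qmu2 s + 1 := by
  rw [qInr, qmu2_rmk, mu2, qmu2_rout]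
theorem qmu1_app (s : ResTerm) (t : Multiset ResTerm) :
    qmu1 (qApp s t) = qmu1 s + qmu1M t + 1 := by
  rw [qApp, qmu1_rmk, mu1, qmu1_rout, mu1L_toList]
theorem qmu2_app (s : ResTerm) (t : Multiset ResTerm) :
    qmu2 (qApp s t) = 2 * (qmu2 s + qmu2M t + 1) := by
  rw [qApp, qmu2_rmk, mu2, qmu2_rout, mu2L_toList]
theorem qmu1M_cons (s : ResTerm) (t : Multiset ResTerm) :
    qmu1M (s ::ₘ t) = qmu1 s + qmu1M t := by simp [qmu1M]
theorem qmu2M_cons (s : ResTerm) (t : Multiset ResTerm) :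
    qmu2M (s ::ₘ t) = qmu2 s + qmu2M t := by simp [qmu2M]

/-! Shifting and rigid substitution do not increase `mu1`. -/

theorem mu1_attach_sum (es : List Rt) (f : Rt → ℕ) :
    ((es.attach.map fun e => f e.1).sum) = (es.map f).sum := by
  have : (es.attach.map fun e => f e.1) = es.map f := by
    rw [← List.attach_map_val (l := es) (f := f)]
  rw [this]

theorem mu1_shift (c : ℕ) (a : Rt) : mu1 (a.shiftR c) = mu1 a := by
  match a with
  | .var n => simp [Rt.shiftR, mu1]
  | .lam a => rw [Rt.shiftR, mu1, mu1, mu1_shift (c+1) a]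
  | .inl a => rw [Rt.shiftR, mu1, mu1, mu1_shift c a]
  | .inr a => rw [Rt.shiftR, mu1, mu1, mu1_shift c a]
  | .app d es =>
    rw [Rt.shiftR, mu1, mu1, mu1_shift c d, mu1L_eq, mu1L_eq]
    congr 2
    rw [List.map_map]
    have : (es.attach.map (mu1 ∘ fun e => e.1.shiftR c))
        = es.attach.map (fun e => mu1 e.1) := by
      apply List.map_congr_left
      intro e _
      exact mu1_shift c e.1
    rw [this, mu1_attach_sum es mu1]
termination_by sizeOf a
decreasing_by
  all_goals simp_wf
  all_goals try omega
  have := List.sizeOf_lt_of_mem e.2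
  omega

theorem mu1L_shift (c : ℕ) (bs : List Rt) : mu1L (bs.map (Rt.shiftR c)) = mu1L bs := by
  rw [mu1L_eq, mu1L_eq, List.map_map]
  congr 1
  apply List.map_congr_left
  intro b _
  exact mu1_shift c b

theorem mu1L_take_drop (n : ℕ) (bs : List Rt) :
    mu1L (bs.take n) + mu1L (bs.drop n) = mu1L bs := by
  rw [mu1L_eq, mu1L_eq, mu1L_eq]
  rw [← List.sum_append, ← List.map_append, List.take_append_drop]

mutual
  theorem rsubst_mu1 (r : Rt) (x : ℕ) (bs : List Rt) (u : Rt)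
      (h : rsubst r x bs = some u) : mu1 u ≤ mu1 r + mu1L bs := by
    match r with
    | .var n =>
      rcases bs with _ | ⟨b, _ | ⟨b₂, bs'⟩⟩
      · have h' : (if n = x then (none : Option Rt)
            else some (Rt.var (if x < n then n - 1 else n))) = some u := h
        by_cases hnx : n = x
        · rw [if_pos hnx] at h'; exact absurd h'.symm (Option.some_ne_none u)
        · rw [if_neg hnx] at h'
          injection h' with h'
          subst h'; simp [mu1, mu1L]
      · have h' : (if n = x then some b else (none : Option Rt)) = some u := h
        by_cases hnx : n = x
        · rw [if_pos hnx] at h'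
          injection h' with h'
          subst h'; simp [mu1, mu1L]
        · rw [if_neg hnx] at h'; exact absurd h'.symm (Option.some_ne_none u)
      · have h' : (if n = x then (none : Option Rt) else (none : Option Rt)) = some u := h
        rw [ite_self] at h'
        exact absurd h'.symm (Option.some_ne_none u)
    | .lam a =>
      have h2 : (rsubst a (x + 1) (bs.map (Rt.shiftR 0))).map Rt.lam = some u := h
      match hh : rsubst a (x+1) (bs.map (Rt.shiftR 0)), h2 with
      | some u', h2 =>
        simp only [Option.map_some, Option.some.injEq] at h2
        subst h2
        have := rsubst_mu1 a (x+1) (bs.map (Rt.shiftR 0)) u' hh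
        rw [mu1L_shift] at this
        simp [mu1]; omega
      | none, h2 => exact absurd h2.symm (Option.some_ne_none u)
    | .inl a =>
      have h2 : (rsubst a x bs).map Rt.inl = some u := h
      match hh : rsubst a x bs, h2 with
      | some u', h2 =>
        simp only [Option.map_some, Option.some.injEq] at h2
        subst h2
        have := rsubst_mu1 a x bs u' hh
        simp [mu1]; omega
      | none, h2 => exact absurd h2.symm (Option.some_ne_none u)
    | .inr a =>
      have h2 : (rsubst a x bs).map Rt.inr = some u := h
      match hh : rsubst a x bs, h2 with
      | some u', h2 =>
        simp only [Option.map_some, Option.some.injEq] at h2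
        subst h2
        have := rsubst_mu1 a x bs u' hh
        simp [mu1]; omega
      | none, h2 => exact absurd h2.symm (Option.some_ne_none u)
    | .app c ds =>
      have h2 : (match rsubst c x (bs.take (nx x c)), rsubstL ds x (bs.drop (nx x c)) with
          | some c', some ds' => some (Rt.app c' ds')
          | _, _ => none) = some u := h
      match hc : rsubst c x (bs.take (nx x c)),
            hd : rsubstL ds x (bs.drop (nx x c)), h2 with
      | some c', some ds', h2 =>
        simp only [Option.some.injEq] at h2
        subst h2
        have h1 := rsubst_mu1 c x (bs.take (nx x c)) c' hc
        have h2 := rsubstL_mu1 ds x (bs.drop (nx x c)) ds' hd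
        have h3 := mu1L_take_drop (nx x c) bs
        simp only [mu1]
        omega
      | none, _, h2 => exact absurd h2.symm (Option.some_ne_none u)
      | some _, none, h2 => exact absurd h2.symm (Option.some_ne_none u)
  termination_by sizeOf r
  decreasing_by all_goals simp_wf <;> omega

  theorem rsubstL_mu1 (l : List Rt) (x : ℕ) (bs : List Rt) (u : List Rt)
      (h : rsubstL l x bs = some u) : mu1L u ≤ mu1L l + mu1L bs := by
    match l with
    | [] =>
      rcases bs with _ | ⟨b, bs'⟩
      · have h' : some ([] : List Rt) = some u := h
        injection h' with h'
        subst h'; simp [mu1L]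
      · exact absurd (h : (none : Option (List Rt)) = some u).symm (Option.some_ne_none u)
    | a :: as =>
      have h2 : (match rsubst a x (bs.take (nx x a)), rsubstL as x (bs.drop (nx x a)) with
          | some a', some as' => some (a' :: as')
          | _, _ => none) = some u := h
      match ha : rsubst a x (bs.take (nx x a)),
            has : rsubstL as x (bs.drop (nx x a)), h2 with
      | some a', some as', h2 =>
        simp only [Option.some.injEq] at h2
        subst h2
        have h1 := rsubst_mu1 a x (bs.take (nx x a)) a' ha
        have h4 := rsubstL_mu1 as x (bs.drop (nx x a)) as' has
        have h3 := mu1L_take_drop (nx x a) bs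
        simp only [mu1L]
        omega
      | none, _, h2 => exact absurd h2.symm (Option.some_ne_none u)
      | some _, none, h2 => exact absurd h2.symm (Option.some_ne_none u)
  termination_by sizeOf l
  decreasing_by all_goals simp_wf <;> omega
end

theorem mu1L_permList {n : ℕ} (σ : Equiv.Perm (Fin n)) (bs : List Rt) :
    mu1L (permList σ bs) = mu1L bs := by
  rw [permList]
  split
  · rename_i h
    rw [mu1L_eq, mu1L_eq, List.map_ofFn, List.sum_ofFn]
    calc ∑ j : Fin n, (mu1 ∘ bs.get) ((σ.symm j).cast h.symm)
        = ∑ i : Fin bs.length, (mu1 ∘ bs.get) i := by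
          exact Fintype.sum_equiv (σ.symm.trans (finCongr h.symm)) _ _ (fun j => rfl)
      _ = (bs.map mu1).sum := by
          rw [← List.sum_ofFn, ← List.map_ofFn, List.ofFn_get]
  · rfl

/-! Every element of a one-step reduct is strictly smaller. -/

theorem beta_supp {s : ResTerm} {t : Multiset ResTerm} {e' : ResExpr}
    (he' : e' ∈ (dsub 0 (.inl s) t).support) :
    ∃ u' : Rt, e' = .inl (rmk u') ∧ mu1 u' ≤ qmu1 s + qmu1M t := by
  classical
  rw [dsub, dsubRig] at he'
  have hmem := Finsupp.support_finset_sum he'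
  rw [Finset.mem_biUnion] at hmem
  obtain ⟨σ, -, hσ⟩ := hmem
  cases hr : rsubstE (outE (Sum.inl s)) 0 (permList σ (t.toList.map rout)) with
  | none =>
    rw [hr] at hσ
    have hσ' : e' ∈ (0 : ResExpr →₀ ℕ).support := hσ
    simp at hσ'
  | some u =>
    rw [hr] at hσ
    have hσ' : e' ∈ (Finsupp.single (toQ u) 1).support := hσ
    have he2 : e' = toQ u := by
      have := Finsupp.support_single_subset hσ'
      simpa using this
    have hr2 : (rsubst (rout s) 0 (permList σ (t.toList.map rout))).map Sum.inl = some u := hr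
    cases hu : rsubst (rout s) 0 (permList σ (t.toList.map rout)) with
    | none => rw [hu] at hr2; exact absurd hr2.symm (Option.some_ne_none u)
    | some u' =>
      rw [hu] at hr2
      simp only [Option.map_some, Option.some.injEq] at hr2
      subst hr2
      refine ⟨u', by simpa [toQ] using he2, ?_⟩
      have h1 := rsubst_mu1 _ _ _ _ hu
      rw [mu1L_permList σ, mu1L_toList, qmu1_rout] at h1
      exact h1

theorem red_dec {e : ResExpr} {E' : ResExpr →₀ ℕ} (h : Red e E') :
    ∀ e' ∈ E'.support, e'.isLeft = e.isLeft ∧ MLT (meas e') (meas e) := by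
  induction h with
  | beta s t =>
    intro e' he'
    obtain ⟨u', rfl, hle⟩ := beta_supp he'
    refine ⟨rfl, ?_⟩
    rw [mlt_iff]
    left
    show mu1 u' < qmu1 (qApp (qLam s) t)
    rw [qmu1_app, qmu1_lam]
    omega
  | appInl s t =>
    intro e' he'
    have := Finsupp.support_single_subset he'
    rw [Finset.mem_singleton] at this
    subst this
    refine ⟨rfl, ?_⟩
    rw [mlt_iff]
    simp only [meas, Sum.elim_inl]
    rw [qmu1_inl, qmu1_app, qmu1_app, qmu1_inl, qmu2_inl, qmu2_app, qmu2_app, qmu2_inl]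
    omega
  | appInr s t =>
    intro e' he'
    have := Finsupp.support_single_subset he'
    rw [Finset.mem_singleton] at this
    subst this
    refine ⟨rfl, ?_⟩
    rw [mlt_iff]
    simp only [meas, Sum.elim_inl]
    rw [qmu1_inr, qmu1_app, qmu1_app, qmu1_inr, qmu2_inr, qmu2_app, qmu2_app, qmu2_inr]
    omega
  | lamInl s =>
    intro e' he'
    have := Finsupp.support_single_subset he'
    rw [Finset.mem_singleton] at this
    subst this
    refine ⟨rfl, ?_⟩
    rw [mlt_iff]
    simp only [meas, Sum.elim_inl]
    rw [qmu1_inl, qmu1_lam, qmu1_lam, qmu1_inl, qmu2_inl, qmu2_lam, qmu2_lam, qmu2_inl]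
    omega
  | lamInr s =>
    intro e' he'
    have := Finsupp.support_single_subset he'
    rw [Finset.mem_singleton] at this
    subst this
    refine ⟨rfl, ?_⟩
    rw [mlt_iff]
    simp only [meas, Sum.elim_inl]
    rw [qmu1_inr, qmu1_lam, qmu1_lam, qmu1_inr, qmu2_inr, qmu2_lam, qmu2_lam, qmu2_inr]
    omega
  | @lamCtx s S hred ih =>
    intro e' he'
    classical
    have := Finsupp.mapDomain_support he'
    rw [Finset.mem_image] at this
    obtain ⟨e₀, he₀, rfl⟩ := this
    obtain ⟨hside, hlt⟩ := ih e₀ he₀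
    match e₀, hside with
    | .inl s₀, _ =>
      refine ⟨rfl, ?_⟩
      show MLT (meas (.inl (qLam s₀))) (meas (.inl (qLam s)))
      rw [mlt_iff] at hlt ⊢
      simp only [meas, Sum.elim_inl] at hlt ⊢
      rw [qmu1_lam, qmu1_lam, qmu2_lam, qmu2_lam]
      omega
  | @appLCtx s S t hred ih =>
    intro e' he'
    classical
    have := Finsupp.mapDomain_support he'
    rw [Finset.mem_image] at this
    obtain ⟨e₀, he₀, rfl⟩ := this
    obtain ⟨hside, hlt⟩ := ih e₀ he₀
    match e₀, hside with
    | .inl s₀, _ =>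
      refine ⟨rfl, ?_⟩
      show MLT (meas (.inl (qApp s₀ t))) (meas (.inl (qApp s t)))
      rw [mlt_iff] at hlt ⊢
      simp only [meas, Sum.elim_inl] at hlt ⊢
      rw [qmu1_app, qmu1_app, qmu2_app, qmu2_app]
      omega
  | @appRCtx t T s hred ih =>
    intro e' he'
    classical
    have := Finsupp.mapDomain_support he'
    rw [Finset.mem_image] at this
    obtain ⟨e₀, he₀, rfl⟩ := this
    obtain ⟨hside, hlt⟩ := ih e₀ he₀
    match e₀, hside with
    | .inr t₀, _ =>
      refine ⟨rfl, ?_⟩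
      show MLT (meas (.inl (qApp s t₀))) (meas (.inl (qApp s t)))
      rw [mlt_iff] at hlt ⊢
      simp only [meas, Sum.elim_inl, Sum.elim_inr] at hlt ⊢
      rw [qmu1_app, qmu1_app, qmu2_app, qmu2_app]
      omega
  | @inlCtx s S hred ih =>
    intro e' he'
    classical
    have := Finsupp.mapDomain_support he'
    rw [Finset.mem_image] at this
    obtain ⟨e₀, he₀, rfl⟩ := this
    obtain ⟨hside, hlt⟩ := ih e₀ he₀
    match e₀, hside with
    | .inl s₀, _ =>
      refine ⟨rfl, ?_⟩
      show MLT (meas (.inl (qInl s₀))) (meas (.inl (qInl s)))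
      rw [mlt_iff] at hlt ⊢
      simp only [meas, Sum.elim_inl] at hlt ⊢
      rw [qmu1_inl, qmu1_inl, qmu2_inl, qmu2_inl]
      omega
  | @inrCtx s S hred ih =>
    intro e' he'
    classical
    have := Finsupp.mapDomain_support he'
    rw [Finset.mem_image] at this
    obtain ⟨e₀, he₀, rfl⟩ := this
    obtain ⟨hside, hlt⟩ := ih e₀ he₀
    match e₀, hside with
    | .inl s₀, _ =>
      refine ⟨rfl, ?_⟩
      show MLT (meas (.inl (qInr s₀))) (meas (.inl (qInr s)))
      rw [mlt_iff] at hlt ⊢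
      simp only [meas, Sum.elim_inl] at hlt ⊢
      rw [qmu1_inr, qmu1_inr, qmu2_inr, qmu2_inr]
      omega
  | @monCtx s S t hred ih =>
    intro e' he'
    classical
    have := Finsupp.mapDomain_support he'
    rw [Finset.mem_image] at this
    obtain ⟨e₀, he₀, rfl⟩ := this
    obtain ⟨hside, hlt⟩ := ih e₀ he₀
    match e₀, hside with
    | .inl s₀, _ =>
      refine ⟨rfl, ?_⟩
      show MLT (meas (.inr (s₀ ::ₘ t))) (meas (.inr (s ::ₘ t)))
      rw [mlt_iff] at hlt ⊢
      simp only [meas, Sum.elim_inl, Sum.elim_inr] at hlt ⊢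
      rw [qmu1M_cons, qmu1M_cons, qmu2M_cons, qmu2M_cons]
      omega

/-! Lifting the measure to sums. -/

noncomputable def psi (E : ResExpr →₀ ℕ) : (ℕ × ℕ) →₀ ℕ :=
  E.sum fun e n => Finsupp.single (meas e) n

theorem mlt_asymm {p q : ℕ × ℕ} (h : MLT p q) : ¬ MLT q p := by
  rw [mlt_iff] at h ⊢; omega

theorem mlt_irrefl (p : ℕ × ℕ) : ¬ MLT p p := by
  rw [mlt_iff]; omega

theorem mlt_wf : WellFounded MLT :=
  WellFounded.prod_lex (Nat.lt_wfRel.wf) (Nat.lt_wfRel.wf)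

def LexRel : ((ℕ × ℕ) →₀ ℕ) → ((ℕ × ℕ) →₀ ℕ) → Prop :=
  Finsupp.Lex (Function.swap MLT) (· < ·)

theorem lexRel_wf : WellFounded LexRel := by
  apply Finsupp.Lex.wellFounded
  · exact fun n h => Nat.not_lt_zero n h
  · exact Nat.lt_wfRel.wf
  · apply Subrelation.wf (r := MLT)
    · intro p q hpq
      obtain ⟨h1, h2⟩ := hpq
      have h1' : ¬ MLT q p := h1
      rw [mlt_iff] at h1' ⊢
      have : p ≠ q := h2
      have : p.1 ≠ q.1 ∨ (p.1 = q.1 ∧ p.2 ≠ q.2) := by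
        by_contra hcon
        push_neg at hcon
        exact h2 (Prod.ext (by omega) (by tauto))
      omega
    · exact mlt_wf

theorem psi_apply_eq_zero {E₀ : ResExpr →₀ ℕ} {m : ℕ × ℕ}
    (hE : ∀ e₀ ∈ E₀.support, MLT (meas e₀) m) {d : ℕ × ℕ} (hd : ¬ MLT d m) :
    psi E₀ d = 0 := by
  rw [psi, Finsupp.sum_apply]
  apply Finset.sum_eq_zero
  intro e₀ he₀
  apply Finsupp.single_eq_of_ne
  intro hcon
  exact hd (hcon ▸ hE e₀ he₀)

theorem psi_step {E E' : ResExpr →₀ ℕ} (h : RedS E E') : LexRel (psi E') (psi E) := by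
  obtain ⟨e, E₀, F, hred, rfl, rfl⟩ := h
  have hsum : ∀ G H : ResExpr →₀ ℕ, psi (G + H) = psi G + psi H := by
    intro G H
    exact Finsupp.sum_add_index' (fun a => Finsupp.single_zero _) (fun a b c => Finsupp.single_add _ _ _)
  have hsingle : psi (Finsupp.single e 1) = Finsupp.single (meas e) 1 :=
    Finsupp.sum_single_index (by simp)
  have hE₀ := red_dec hred
  rw [LexRel, Finsupp.lex_def]
  refine ⟨meas e, ?_, ?_⟩
  · intro d hd
    have hd' : MLT (meas e) d := hd
    rw [hsum, hsum, hsingle]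
    simp only [Finsupp.add_apply]
    rw [psi_apply_eq_zero (fun e₀ he₀ => (hE₀ e₀ he₀).2) (mlt_asymm hd'),
      Finsupp.single_eq_of_ne' (by intro hcon; rw [hcon] at hd'; exact mlt_irrefl d hd')]
  · rw [hsum, hsum, hsingle]
    simp only [Finsupp.add_apply]
    rw [psi_apply_eq_zero (fun e₀ he₀ => (hE₀ e₀ he₀).2) (mlt_irrefl (meas e)),
      Finsupp.single_eq_same]
    omega

end SN

/-! ### STATEMENT 2:
The resource reduction relation `→∂` on finite ℕ-linear sums of resource
expressions is strongly normalizing: there is no infinite sequence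
`E₀ →∂ E₁ →∂ E₂ →∂ ⋯`. -/
theorem red_strongly_normalizing :
    ¬ ∃ E : ℕ → (ResExpr →₀ ℕ), ∀ n : ℕ, RedS (E n) (E (n + 1)) := by
  rintro ⟨E, hE⟩
  have hwf := lexRel_wf
  obtain ⟨m, ⟨n, rfl⟩, hmin⟩ :=
    hwf.has_min (Set.range fun n => psi (E n)) ⟨psi (E 0), 0, rfl⟩
  exact hmin (psi (E (n + 1))) ⟨n + 1, rfl⟩ (psi_step (hE n))
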